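/- Let G = GL(3, 𝔽₂) act on the set X of 1-dimensional linear subspaces of 𝔽₂³ and on the set Y of 2-dimensional linear subspaces of 𝔽₂³, in each case by taking images under the linear map. Then the induced linear permutation representations of G on ℂ^X and ℂ^Y are isomorphic as complex representations of G. -/

import Mathlib

abbrev V2 : Type := Fin 3 → ZMod 2

/-- An element of `GL(3, 𝔽₂)` as a linear automorphism of `𝔽₂³`. -/
noncomputable def glLinearEquiv (g : GL (Fin 3) (ZMod 2)) : V2 ≃ₗ[ZMod 2] V2 :=
  LinearMap.GeneralLinearGroup.generalLinearEquiv (ZMod 2) V2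
    (Matrix.GeneralLinearGroup.toLin g)

lemma glLinearEquiv_one (x : V2) : glLinearEquiv 1 x = x := by
  simp [glLinearEquiv]

lemma glLinearEquiv_mul (g h : GL (Fin 3) (ZMod 2)) (x : V2) :
    glLinearEquiv (g * h) x = glLinearEquiv g (glLinearEquiv h x) := by
  have : glLinearEquiv (g * h) = glLinearEquiv g * glLinearEquiv h := by
    simp [glLinearEquiv, map_mul]
  rw [this]
  rfl

/-- The action of `GL(3, 𝔽₂)` on the set of all linear subspaces of `𝔽₂³`,
by taking images under the linear map. -/
noncomputable def subAct : GL (Fin 3) (ZMod 2) →* Equiv.Perm (Submodule (ZMod 2) V2) where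
  toFun g := (Submodule.orderIsoMapComap (glLinearEquiv g)).toEquiv
  map_one' := by
    ext W
    have h1 : ∀ y, (glLinearEquiv 1).symm y = y :=
      fun y => (LinearEquiv.symm_apply_eq _).2 (glLinearEquiv_one y).symm
    simp [Submodule.orderIsoMapComap, h1]
  map_mul' g h := by
    ext W
    have h2 : ∀ y, (glLinearEquiv (g * h)).symm y =
        (glLinearEquiv h).symm ((glLinearEquiv g).symm y) :=
      fun y => (LinearEquiv.symm_apply_eq _).2 (by rw [glLinearEquiv_mul]; simp)
    simp [Submodule.orderIsoMapComap, h2]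

lemma subAct_finrank (g : GL (Fin 3) (ZMod 2)) (W : Submodule (ZMod 2) V2) :
    Module.finrank (ZMod 2) (subAct g W) = Module.finrank (ZMod 2) W := by
  have h : subAct g W = W.map ((glLinearEquiv g) : V2 →ₗ[ZMod 2] V2) := by
    ext x
    simp only [subAct, Submodule.orderIsoMapComap, MonoidHom.coe_mk, OneHom.coe_mk,
      RelIso.coe_fn_toEquiv, Submodule.mem_map, LinearEquiv.coe_coe]
    rfl
  rw [h, LinearEquiv.finrank_map_eq]

/-- The action of `GL(3, 𝔽₂)` on the set of `r`-dimensional linear subspaces of `𝔽₂³`,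
by taking images under the linear map. -/
noncomputable def fanoRep (r : ℕ) :
    GL (Fin 3) (ZMod 2) →*
      Equiv.Perm {W : Submodule (ZMod 2) V2 // Module.finrank (ZMod 2) W = r} where
  toFun g := (subAct g).subtypePerm (fun W => by rw [subAct_finrank])
  map_one' := by
    ext W
    simp [Equiv.Perm.subtypePerm_apply]
  map_mul' g h := by
    ext W
    simp [Equiv.Perm.subtypePerm_apply]
    exact Iff.rfl

/-- The linear permutation representation of `G` on `ℂ^X` induced by a permutation
action `ρ : G → Perm X`: each `g` permutes the standard basis vectors according to `ρ g`. -/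
noncomputable def permRep {G X : Type*} [Group G] (ρ : G →* Equiv.Perm X) :
    Representation ℂ G (X → ℂ) where
  toFun g := LinearMap.funLeft ℂ ℂ (⇑((ρ g)⁻¹))
  map_one' := by ext v x; simp
  map_mul' g h := by ext v x; simp [mul_inv_rev]

/-! Points and lines of the Fano plane form a symmetric design: every point lies on three
lines and two distinct points lie on exactly one common line. The incidence map
`u ↦ (U ↦ ∑_{W ≤ U} u W)` from `ℂ^X` to `ℂ^Y` commutes with the two permutation actions, and
composing it with its transpose gives `2 I + J`, which is invertible; as `|X| = |Y|`, the
incidence map is an isomorphism of representations. -/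

open Finset

lemma permRep_apply {G X : Type*} [Group G] (ρ : G →* Equiv.Perm X) (g : G) (u : X → ℂ)
    (x : X) : permRep ρ g u x = u ((ρ g)⁻¹ x) := rfl

section Incidence

variable {X Y : Type*} (R : X → Y → Prop) [DecidableRel R] [Fintype X]

def incidenceMap (K : Type*) [CommSemiring K] : (X → K) →ₗ[K] (Y → K) where
  toFun u y := ∑ x with R x y, u x
  map_add' u u' := by ext y; simp [sum_add_distrib]
  map_smul' c u := by ext y; simp [mul_sum]

lemma incidenceMap_apply {K : Type*} [CommSemiring K] (u : X → K) (y : Y) :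
    incidenceMap R K u y = ∑ x with R x y, u x := rfl

lemma incidenceMap_permRep {G : Type*} [Group G] (ρ : G →* Equiv.Perm X)
    (σ : G →* Equiv.Perm Y) (hR : ∀ g x y, R (ρ g x) (σ g y) ↔ R x y) (g : G) (u : X → ℂ) :
    incidenceMap R ℂ (permRep ρ g u) = permRep σ g (incidenceMap R ℂ u) := by
  ext y
  simp only [incidenceMap_apply, permRep_apply, sum_filter]
  refine Fintype.sum_equiv (ρ g)⁻¹ _ _ fun x => if_congr ?_ rfl rfl
  rw [← map_inv, ← map_inv, hR]

lemma sum_incidenceMap_of_design {K : Type*} [Field K] [Fintype Y] [DecidableEq X] {k l : ℕ}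
    (hcount : ∀ x₀ x, #{y | R x₀ y ∧ R x y} = if x = x₀ then k else l) (u : X → K) (x₀ : X) :
    ∑ y with R x₀ y, incidenceMap R K u y = ((k : K) - l) * u x₀ + l * ∑ x, u x :=
  calc ∑ y with R x₀ y, incidenceMap R K u y
      = ∑ x, (#{y | R x₀ y ∧ R x y} : K) * u x := by
        simp only [incidenceMap_apply]
        rw [sum_comm' (t' := univ) (s' := fun x => {y | R x₀ y ∧ R x y}) (by simp)]
        simp [sum_const, nsmul_eq_mul]
    _ = ∑ x, ((if x = x₀ then ((k : K) - l) * u x else 0) + l * u x) :=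
        sum_congr rfl fun x _ => by rw [hcount]; split_ifs <;> ring
    _ = ((k : K) - l) * u x₀ + l * ∑ x, u x := by
        rw [sum_add_distrib, Fintype.sum_ite_eq', mul_sum]

lemma incidenceMap_injective {K : Type*} [Field K] [CharZero K] [Fintype Y] {k l : ℕ}
    (hlk : l < k) (hk : ∀ x, Nat.card {y // R x y} = k)
    (hl : ∀ x x', x ≠ x' → Nat.card {y // R x y ∧ R x' y} = l) :
    Function.Injective (incidenceMap R K) := by
  classical
  have hcount : ∀ x₀ x, #{y | R x₀ y ∧ R x y} = if x = x₀ then k else l := by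
    intro x₀ x
    split_ifs with h
    · subst h; simpa [Fintype.card_subtype, Nat.card_eq_fintype_card] using hk x
    · simpa [Fintype.card_subtype, Nat.card_eq_fintype_card] using hl x₀ x (Ne.symm h)
  rw [← LinearMap.ker_eq_bot, eq_bot_iff]
  intro u hu
  rw [LinearMap.mem_ker] at hu
  have key : ∀ x₀, ((k : K) - l) * u x₀ + l * ∑ x, u x = 0 := fun x₀ => by
    rw [← sum_incidenceMap_of_design R hcount, hu]; simp
  have hsum : ∑ x, u x = 0 := by
    have h := sum_congr rfl fun x₀ (_ : x₀ ∈ univ) => key x₀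
    rw [sum_add_distrib, ← mul_sum, sum_const, card_univ, nsmul_eq_mul, sum_const_zero] at h
    have hne : ((k - l + Fintype.card X * l : ℕ) : K) ≠ 0 := by
      exact_mod_cast (by omega : k - l + Fintype.card X * l ≠ 0)
    push_cast [Nat.cast_sub hlk.le] at hne
    exact (mul_eq_zero.mp (by linear_combination h)).resolve_left hne
  ext x₀
  have hkl : (k : K) - l ≠ 0 := sub_ne_zero.mpr (by exact_mod_cast hlk.ne')
  simpa [hsum, hkl] using key x₀

omit [DecidableRel R] in
theorem exists_permRep_linearEquiv_of_design {G : Type*} [Group G] [Fintype Y]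
    (ρ : G →* Equiv.Perm X) (σ : G →* Equiv.Perm Y) (hR : ∀ g x y, R (ρ g x) (σ g y) ↔ R x y)
    (hcard : Fintype.card X = Fintype.card Y) {k l : ℕ} (hlk : l < k)
    (hk : ∀ x, Nat.card {y // R x y} = k)
    (hl : ∀ x x', x ≠ x' → Nat.card {y // R x y ∧ R x' y} = l) :
    ∃ e : (X → ℂ) ≃ₗ[ℂ] (Y → ℂ), ∀ g v, e (permRep ρ g v) = permRep σ g (e v) := by
  classical
  refine ⟨(incidenceMap R ℂ).linearEquivOfInjective (incidenceMap_injective R hlk hk hl)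
    (by simp [hcard]), fun g v => ?_⟩
  simp only [LinearMap.linearEquivOfInjective_apply, incidenceMap_permRep R ρ σ hR]

end Incidence

section ZModTwo

open Module

variable {V : Type*} [AddCommGroup V] [Module (ZMod 2) V]

noncomputable def spanSingletonEquiv :
    {v : V // v ≠ 0} ≃ {W : Submodule (ZMod 2) V // finrank (ZMod 2) W = 1} :=
  Equiv.ofBijective (fun v => ⟨Submodule.span (ZMod 2) {v.1}, finrank_span_singleton v.2⟩) <| by
    constructor
    · rintro ⟨v, hv⟩ ⟨v', hv'⟩ h
      obtain ⟨c, hc⟩ := Submodule.span_singleton_eq_span_singleton.mp (congrArg Subtype.val h)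
      simpa [Subsingleton.elim c 1] using hc
    · rintro ⟨W, hW⟩
      have : FiniteDimensional (ZMod 2) W := Module.finite_of_finrank_eq_succ hW
      obtain ⟨v, hvW, hv⟩ := Submodule.exists_mem_ne_zero_of_ne_bot
        (Submodule.one_le_finrank_iff.mp hW.ge)
      exact ⟨⟨v, hv⟩, Subtype.ext <| Submodule.eq_of_le_of_finrank_eq
        ((Submodule.span_singleton_le_iff_mem v W).mpr hvW) (by rw [hW, finrank_span_singleton hv])⟩

lemma Module.Dual.eq_of_ker_eq_of_ne_zero [FiniteDimensional (ZMod 2) V]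
    {f g : Dual (ZMod 2) V} (hf : f ≠ 0) (h : LinearMap.ker f = LinearMap.ker g) : f = g := by
  obtain ⟨x, hx⟩ := DFunLike.ne_iff.mp hf
  have hgx : g x ≠ 0 := by rwa [Ne, ← LinearMap.mem_ker, ← h, LinearMap.mem_ker]
  exact Module.Dual.eq_of_ker_eq_of_apply_eq x h
    (by rw [Fin.eq_one_of_ne_zero _ hx, Fin.eq_one_of_ne_zero _ hgx]) hx

end ZModTwo

section Hyperplanes

open Module Matrix

lemma span_singleton_le_ker_dotProductEquiv {R ι : Type*} [CommRing R] [Fintype ι]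
    [DecidableEq ι] (v w : ι → R) :
    Submodule.span R {v} ≤ LinearMap.ker (dotProductEquiv R ι w) ↔ w ⬝ᵥ v = 0 := by
  rw [Submodule.span_singleton_le_iff_mem, LinearMap.mem_ker, dotProductEquiv_apply_apply]

noncomputable def kerDotProductEquiv (n : ℕ) :
    {w : Fin (n + 1) → ZMod 2 // w ≠ 0} ≃
      {U : Submodule (ZMod 2) (Fin (n + 1) → ZMod 2) // finrank (ZMod 2) U = n} :=
  Equiv.ofBijective (fun w => ⟨LinearMap.ker (dotProductEquiv (ZMod 2) _ w.1), by
      have := Dual.finrank_ker_add_one_of_ne_zero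
        ((dotProductEquiv (ZMod 2) (Fin (n + 1))).map_ne_zero_iff.mpr w.2)
      simpa using this⟩) <| by
    constructor
    · rintro ⟨w, hw⟩ ⟨w', hw'⟩ h
      exact Subtype.ext <| (dotProductEquiv (ZMod 2) _).injective <|
        Dual.eq_of_ker_eq_of_ne_zero ((dotProductEquiv _ _).map_ne_zero_iff.mpr hw)
          (congrArg Subtype.val h)
    · rintro ⟨U, hU⟩
      have hlt : U < ⊤ := lt_top_iff_ne_top.mpr fun h => by
        rw [h, finrank_top, finrank_fin_fun] at hU; omega
      obtain ⟨f, hf, hUf⟩ := U.exists_le_ker_of_lt_top hlt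
      refine ⟨⟨(dotProductEquiv (ZMod 2) _).symm f, (LinearEquiv.map_ne_zero_iff _).mpr hf⟩,
        Subtype.ext ?_⟩
      have := Dual.finrank_ker_add_one_of_ne_zero hf
      simpa using (Submodule.eq_of_le_of_finrank_eq hUf
        (by rw [finrank_fin_fun] at this; omega)).symm

end Hyperplanes

namespace Fano

open Module Matrix

abbrev Point := {W : Submodule (ZMod 2) V2 // finrank (ZMod 2) W = 1}
abbrev Line := {U : Submodule (ZMod 2) V2 // finrank (ZMod 2) U = 2}

noncomputable instance : Fintype Point := .ofFinite _
noncomputable instance : Fintype Line := .ofFinite _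

lemma card_point_eq_card_line : Fintype.card Point = Fintype.card Line :=
  Fintype.card_congr (spanSingletonEquiv.symm.trans (kerDotProductEquiv 2))

lemma fanoRep_le_fanoRep_iff {r s : ℕ} (g : GL (Fin 3) (ZMod 2))
    (W : {W : Submodule (ZMod 2) V2 // finrank (ZMod 2) W = r})
    (U : {U : Submodule (ZMod 2) V2 // finrank (ZMod 2) U = s}) :
    (fanoRep r g W).1 ≤ (fanoRep s g U).1 ↔ W.1 ≤ U.1 :=
  (Submodule.orderIsoMapComap (glLinearEquiv g)).le_iff_le

lemma card_common_orthogonal : ∀ v v' : {v : V2 // v ≠ 0},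
    #{w : {w : V2 // w ≠ 0} | w.1 ⬝ᵥ v.1 = 0 ∧ w.1 ⬝ᵥ v'.1 = 0} = if v = v' then 3 else 1 := by
  decide

lemma card_lines_through (W W' : Point) :
    Nat.card {U : Line // W.1 ≤ U.1 ∧ W'.1 ≤ U.1} = if W = W' then 3 else 1 := by
  obtain ⟨v, rfl⟩ := spanSingletonEquiv.surjective W
  obtain ⟨v', rfl⟩ := spanSingletonEquiv.surjective W'
  simp only [Equiv.apply_eq_iff_eq]
  rw [← card_common_orthogonal, ← Fintype.card_subtype, ← Nat.card_eq_fintype_card]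
  refine Nat.card_congr ((kerDotProductEquiv 2).subtypeEquiv fun w => ?_).symm
  exact (and_congr (span_singleton_le_ker_dotProductEquiv _ _)
    (span_singleton_le_ker_dotProductEquiv _ _)).symm

end Fano

/-- The linear permutation representations of `GL(3, 𝔽₂)` on `ℂ^X` and `ℂ^Y`, where `X` is
the set of 1-dimensional subspaces (points of the Fano plane) and `Y` is the set of
2-dimensional subspaces (lines of the Fano plane), are isomorphic as complex
representations. -/
theorem fano_points_lines_isospectral :
    ∃ e : ({W : Submodule (ZMod 2) V2 // Module.finrank (ZMod 2) W = 1} → ℂ) ≃ₗ[ℂ]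
          ({U : Submodule (ZMod 2) V2 // Module.finrank (ZMod 2) U = 2} → ℂ),
      ∀ (g : GL (Fin 3) (ZMod 2)) (v : _),
        e (permRep (fanoRep 1) g v) = permRep (fanoRep 2) g (e v) :=
  exists_permRep_linearEquiv_of_design (fun (W : Fano.Point) (U : Fano.Line) => W.1 ≤ U.1)
    (fanoRep 1) (fanoRep 2) Fano.fanoRep_le_fanoRep_iff Fano.card_point_eq_card_line
    (by norm_num : 1 < 3) (fun W => by simpa using Fano.card_lines_through W W)
    fun W W' h => by simpa [h] using Fano.card_lines_through W W'
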